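/- For a bounded operator T_{12} acting only on the first two tensor factors and any weight f, the commutator identity [T_{12}, f̂] = [T_{12}, p_1 p_2 (f̂ - f̂_2) + (p_1 q_2 + q_1 p_2)(f̂ - f̂_1)] holds. -/

import Mathlib

/-!
Sites are indexed from `0`, so the paper's factors 1 and 2 are `0` and `1`.

Splitting the first two factors off the list product defining `P_k = symP N p q k` gives
`P_k = p₀p₁ R_k + (p₀q₁ + q₀p₁) R_{k-1} + q₀q₁ R_{k-2}`, where `R_m` is the analogous
projection for the remaining `N - 2` factors. The four two-site projections are orthogonal and
sum to `1`, so multiplying by them shows that `f̂ - p₀p₁(f̂ - f̂₂) - (p₀q₁ + q₀p₁)(f̂ - f̂₁)` equals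
`∑ₘ f(m + 2) R_m`, which involves only the factors on which `T` acts trivially.
-/

noncomputable section

def symP {E : Type*} [NormedAddCommGroup E] [InnerProductSpace ℂ E]
    (N : ℕ) (p q : Fin N → E →L[ℂ] E) (k : ℕ) : E →L[ℂ] E :=
  ∑ J ∈ Finset.powersetCard k (Finset.univ : Finset (Fin N)),
    ((List.finRange N).map (fun j => if j ∈ J then q j else p j)).prod

def hatW {E : Type*} [NormedAddCommGroup E] [InnerProductSpace ℂ E]
    (N : ℕ) (P : ℕ → E →L[ℂ] E) (f : ℕ → ℝ) : E →L[ℂ] E :=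
  ∑ k ∈ Finset.range (N + 1), (f k : ℂ) • P k

def hatShiftW {E : Type*} [NormedAddCommGroup E] [InnerProductSpace ℂ E]
    (N : ℕ) (P : ℕ → E →L[ℂ] E) (f : ℕ → ℝ) (d : ℤ) : E →L[ℂ] E :=
  ∑ j ∈ Finset.range (N + 1),
    (if 0 ≤ (j : ℤ) + d ∧ (j : ℤ) + d ≤ (N : ℤ) then ((f ((j : ℤ) + d).toNat : ℝ) : ℂ) else 0) • P j

open Finset in
theorem sum_powersetCard_succ_univ_fin {β : Type*} [AddCommMonoid β] {n : ℕ}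
    (F : Finset (Fin (n + 1)) → β) (k : ℕ) :
    ∑ J ∈ powersetCard (k + 1) univ, F J =
      ∑ J ∈ powersetCard (k + 1) univ, F (J.map (Fin.succEmb n)) +
        ∑ J ∈ powersetCard k univ, F (insert 0 (J.map (Fin.succEmb n))) := by
  rw [Fin.univ_succ, cons_eq_insert, powersetCard_succ_insert (by simp), sum_union, sum_image,
    powersetCard_map, sum_map, powersetCard_map, sum_map]
  · rfl
  · intro x hx y hy hxy
    have hx0 : (0 : Fin (n + 1)) ∉ x := fun h => by simpa using (mem_powersetCard.mp hx).1 h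
    have hy0 : (0 : Fin (n + 1)) ∉ y := fun h => by simpa using (mem_powersetCard.mp hy).1 h
    rw [← erase_insert hx0, hxy, erase_insert hy0]
  · rw [disjoint_left]
    rintro J hJ hJ'
    obtain ⟨y, _, rfl⟩ := mem_image.mp hJ'
    simpa using (mem_powersetCard.mp hJ).1 (mem_insert_self 0 y)

theorem Commute.mul_mul_eq_of_mul_eq {S : Type*} [Semigroup S] {x y u v w : S}
    (hxy : Commute x y) (hx : x * u = x * v) (hy : y * v = y * w) : x * y * u = x * y * w := by
  rw [hxy.eq, mul_assoc, hx, ← mul_assoc, ← hxy.eq, mul_assoc, hy, mul_assoc]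

theorem sub_add_mul_sub_eq_of_add_eq_one {R : Type*} [Ring R] {a b c d W W₁ W₂ B : R}
    (hsum : a + (b + c) + d = 1) (ha : a * W₂ = a * B) (hb : b * W₁ = b * B)
    (hc : c * W₁ = c * B) (hd : d * W = d * B) :
    W - (a * (W - W₂) + (b + c) * (W - W₁)) = B :=
  calc W - (a * (W - W₂) + (b + c) * (W - W₁))
      = (a + (b + c) + d) * W - (a * (W - W₂) + (b + c) * (W - W₁)) := by rw [hsum, one_mul]
    _ = a * W₂ + (b * W₁ + c * W₁) + d * W := by noncomm_ring
    _ = (a + (b + c) + d) * B := by rw [ha, hb, hc, hd]; noncomm_ring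
    _ = B := by rw [hsum, one_mul]

def truncShift (N : ℕ) (f : ℕ → ℝ) (d k : ℕ) : ℝ :=
  if k + d ≤ N then f (k + d) else 0

theorem truncShift_succ (N : ℕ) (f : ℕ → ℝ) (d k : ℕ) :
    truncShift N f d (k + 1) = truncShift N f (d + 1) k := by
  simp only [truncShift, add_right_comm k 1 d, add_assoc]

section symP

variable {E : Type*} [NormedAddCommGroup E] [InnerProductSpace ℂ E] {n : ℕ}

open Finset

theorem hatShiftW_natCast (P : ℕ → E →L[ℂ] E) (f : ℕ → ℝ) (d : ℕ) :
    hatShiftW n P f d = hatW n P (truncShift n f d) := by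
  refine sum_congr rfl fun j _ => ?_
  have hcast : ((j : ℤ) + d).toNat = j + d := by omega
  rw [truncShift, apply_ite ((↑) : ℝ → ℂ), Complex.ofReal_zero, hcast]
  congr 1
  exact if_congr (by omega) rfl rfl

theorem hatW_truncShift_zero (P : ℕ → E →L[ℂ] E) (f : ℕ → ℝ) :
    hatW n P (truncShift n f 0) = hatW n P f := by
  refine sum_congr rfl fun j hj => ?_
  rw [truncShift, add_zero, if_pos (Nat.lt_succ_iff.mp (mem_range.mp hj))]

theorem mul_hatW (A : E →L[ℂ] E) (P : ℕ → E →L[ℂ] E) (f : ℕ → ℝ) :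
    A * hatW n P f = hatW n (fun k => A * P k) f := by
  simp only [hatW, mul_sum, mul_smul_comm]

theorem Commute.hatW_right {T : E →L[ℂ] E} {P : ℕ → E →L[ℂ] E} (h : ∀ k, Commute T (P k))
    (f : ℕ → ℝ) : Commute T (hatW n P f) :=
  Commute.sum_right _ _ _ fun k _ => (h k).smul_right _

theorem Commute.symP_right {T : E →L[ℂ] E} {p q : Fin n → E →L[ℂ] E}
    (hp : ∀ j, Commute T (p j)) (hq : ∀ j, Commute T (q j)) (k : ℕ) :
    Commute T (symP n p q k) :=
  Commute.sum_right _ _ _ fun J _ => Commute.list_prod_right _ _ fun x hx => by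
    obtain ⟨j, -, rfl⟩ := List.mem_map.mp hx
    split_ifs
    exacts [hq j, hp j]

theorem symP_eq_zero_of_lt (p q : Fin n → E →L[ℂ] E) {k : ℕ} (hk : n < k) :
    symP n p q k = 0 := by
  rw [symP, powersetCard_eq_empty.mpr (by simpa using hk), sum_empty]

theorem symP_succ_zero (p q : Fin (n + 1) → E →L[ℂ] E) :
    symP (n + 1) p q 0 = p 0 * symP n (Fin.tail p) (Fin.tail q) 0 := by
  simp [symP, List.finRange_succ, Fin.tail, Function.comp_def]

theorem symP_succ_succ (p q : Fin (n + 1) → E →L[ℂ] E) (k : ℕ) :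
    symP (n + 1) p q (k + 1) =
      p 0 * symP n (Fin.tail p) (Fin.tail q) (k + 1) + q 0 * symP n (Fin.tail p) (Fin.tail q) k := by
  rw [symP, sum_powersetCard_succ_univ_fin, symP, symP, mul_sum, mul_sum]
  congr 1 <;> refine sum_congr rfl fun J _ => ?_ <;>
    simp [List.finRange_succ, Fin.tail, Function.comp_def]

section FirstSite

variable {p q : Fin (n + 1) → E →L[ℂ] E}

theorem mul_symP_succ_of_isIdempotentElem (hp : IsIdempotentElem (p 0)) (hq : q 0 = 1 - p 0)
    (k : ℕ) : p 0 * symP (n + 1) p q k = p 0 * symP n (Fin.tail p) (Fin.tail q) k := by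
  cases k with
  | zero => rw [symP_succ_zero, ← mul_assoc, hp.eq]
  | succ k =>
    rw [symP_succ_succ, mul_add, ← mul_assoc, ← mul_assoc, hp.eq, hq, hp.mul_one_sub_self,
      zero_mul, add_zero]

theorem compl_mul_symP_succ_zero (hp : IsIdempotentElem (p 0)) (hq : q 0 = 1 - p 0) :
    q 0 * symP (n + 1) p q 0 = 0 := by
  rw [symP_succ_zero, ← mul_assoc, hq, hp.one_sub_mul_self, zero_mul]

theorem compl_mul_symP_succ_succ (hp : IsIdempotentElem (p 0)) (hq : q 0 = 1 - p 0) (k : ℕ) :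
    q 0 * symP (n + 1) p q (k + 1) = q 0 * symP n (Fin.tail p) (Fin.tail q) k := by
  rw [symP_succ_succ, mul_add, ← mul_assoc, ← mul_assoc, hq, hp.one_sub_mul_self, hp.one_sub.eq,
    zero_mul, zero_add]

theorem mul_hatW_symP_succ_of_isIdempotentElem (hp : IsIdempotentElem (p 0))
    (hq : q 0 = 1 - p 0) (f : ℕ → ℝ) :
    p 0 * hatW (n + 1) (symP (n + 1) p q) f =
      p 0 * hatW n (symP n (Fin.tail p) (Fin.tail q)) f := by
  rw [mul_hatW, mul_hatW, hatW, sum_range_succ, mul_symP_succ_of_isIdempotentElem hp hq,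
    symP_eq_zero_of_lt _ _ (lt_add_one n), mul_zero, smul_zero, add_zero]
  simp only [mul_symP_succ_of_isIdempotentElem hp hq, hatW]

theorem compl_mul_hatW_symP_succ (hp : IsIdempotentElem (p 0)) (hq : q 0 = 1 - p 0)
    (f : ℕ → ℝ) :
    q 0 * hatW (n + 1) (symP (n + 1) p q) f =
      q 0 * hatW n (symP n (Fin.tail p) (Fin.tail q)) (fun k => f (k + 1)) := by
  rw [mul_hatW, mul_hatW, hatW, sum_range_succ', compl_mul_symP_succ_zero hp hq, smul_zero,
    add_zero]
  simp only [compl_mul_symP_succ_succ hp hq, hatW]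

theorem compl_mul_hatW_symP_succ_truncShift (hp : IsIdempotentElem (p 0)) (hq : q 0 = 1 - p 0)
    (N : ℕ) (f : ℕ → ℝ) (d : ℕ) :
    q 0 * hatW (n + 1) (symP (n + 1) p q) (truncShift N f d) =
      q 0 * hatW n (symP n (Fin.tail p) (Fin.tail q)) (truncShift N f (d + 1)) := by
  rw [compl_mul_hatW_symP_succ hp hq, funext (truncShift_succ N f d)]

end FirstSite

theorem hatW_symP_sub_two_site_eq {p q : Fin (n + 2) → E →L[ℂ] E}
    (hp₀ : IsIdempotentElem (p 0)) (hp₁ : IsIdempotentElem (p 1)) (hcomm : Commute (p 0) (p 1))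
    (hq₀ : q 0 = 1 - p 0) (hq₁ : q 1 = 1 - p 1) (N : ℕ) (f : ℕ → ℝ) :
    hatW (n + 2) (symP (n + 2) p q) (truncShift N f 0) -
        (p 0 * p 1 * (hatW (n + 2) (symP (n + 2) p q) (truncShift N f 0) -
            hatW (n + 2) (symP (n + 2) p q) (truncShift N f 2)) +
          (p 0 * q 1 + q 0 * p 1) * (hatW (n + 2) (symP (n + 2) p q) (truncShift N f 0) -
            hatW (n + 2) (symP (n + 2) p q) (truncShift N f 1))) =
      hatW n (symP n (Fin.tail (Fin.tail p)) (Fin.tail (Fin.tail q))) (truncShift N f 2) := by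
  have hsite₀ := mul_hatW_symP_succ_of_isIdempotentElem hp₀ hq₀
  have hsite₀' := compl_mul_hatW_symP_succ_truncShift hp₀ hq₀ N f
  have hsite₁ := mul_hatW_symP_succ_of_isIdempotentElem (p := Fin.tail p) (q := Fin.tail q) hp₁ hq₁
  have hsite₁' :=
    compl_mul_hatW_symP_succ_truncShift (p := Fin.tail p) (q := Fin.tail q) hp₁ hq₁ N f
  have hpq : Commute (p 0) (q 1) := hq₁ ▸ (Commute.one_right _).sub_right hcomm
  have hqp : Commute (q 0) (p 1) := hq₀ ▸ (Commute.one_left _).sub_left hcomm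
  have hqq : Commute (q 0) (q 1) := hq₀ ▸ (Commute.one_left _).sub_left hpq
  refine sub_add_mul_sub_eq_of_add_eq_one (by rw [hq₀, hq₁]; noncomm_ring)
    (hcomm.mul_mul_eq_of_mul_eq (hsite₀ _) (hsite₁ _))
    (hpq.mul_mul_eq_of_mul_eq (hsite₀ _) (hsite₁' 1))
    (hqp.mul_mul_eq_of_mul_eq (hsite₀' 1) (hsite₁ _))
    (hqq.mul_mul_eq_of_mul_eq (hsite₀' 0) (hsite₁' 1))

end symP

theorem stmt5_general {E : Type*} [NormedAddCommGroup E] [InnerProductSpace ℂ E]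
    (N : ℕ) (hN : 1 < N) (p q : Fin N → E →L[ℂ] E)
    (hidem : ∀ j, IsIdempotentElem (p j))
    (hcomm : ∀ i j, Commute (p i) (p j))
    (hq : ∀ j, q j = 1 - p j)
    (f : ℕ → ℝ)
    (T : E →L[ℂ] E)
    (hT : ∀ i : Fin N, i ≠ ⟨0, Nat.lt_of_lt_of_le Nat.one_pos hN.le⟩ → i ≠ ⟨1, hN⟩ →
      Commute T (p i)) :
    T * hatW N (symP N p q) f - hatW N (symP N p q) f * T =
      T * (p ⟨0, Nat.lt_of_lt_of_le Nat.one_pos hN.le⟩ * p ⟨1, hN⟩ *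
            (hatW N (symP N p q) f - hatShiftW N (symP N p q) f 2) +
          (p ⟨0, Nat.lt_of_lt_of_le Nat.one_pos hN.le⟩ * q ⟨1, hN⟩ +
            q ⟨0, Nat.lt_of_lt_of_le Nat.one_pos hN.le⟩ * p ⟨1, hN⟩) *
            (hatW N (symP N p q) f - hatShiftW N (symP N p q) f 1)) -
        (p ⟨0, Nat.lt_of_lt_of_le Nat.one_pos hN.le⟩ * p ⟨1, hN⟩ *
            (hatW N (symP N p q) f - hatShiftW N (symP N p q) f 2) +
          (p ⟨0, Nat.lt_of_lt_of_le Nat.one_pos hN.le⟩ * q ⟨1, hN⟩ +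
            q ⟨0, Nat.lt_of_lt_of_le Nat.one_pos hN.le⟩ * p ⟨1, hN⟩) *
            (hatW N (symP N p q) f - hatShiftW N (symP N p q) f 1)) * T := by
  obtain ⟨M, rfl⟩ : ∃ M, N = M + 2 := ⟨N - 2, by omega⟩
  rw [show (⟨0, Nat.lt_of_lt_of_le Nat.one_pos hN.le⟩ : Fin (M + 2)) = 0 from rfl,
    show (⟨1, hN⟩ : Fin (M + 2)) = 1 from rfl, show (2 : ℤ) = ((2 : ℕ) : ℤ) from rfl,
    show (1 : ℤ) = ((1 : ℕ) : ℤ) from rfl, hatShiftW_natCast, hatShiftW_natCast,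
    ← hatW_truncShift_zero, sub_eq_sub_iff_sub_eq_sub, ← mul_sub, ← sub_mul,
    hatW_symP_sub_two_site_eq (hidem 0) (hidem 1) (hcomm 0 1) (hq 0) (hq 1)]
  have hTp : ∀ j : Fin M, Commute T (p j.succ.succ) := fun j =>
    hT _ (Fin.succ_ne_zero _) (Fin.ne_of_val_ne (by simp))
  have hTq : ∀ j : Fin M, Commute T (q j.succ.succ) := fun j =>
    (hq _).symm ▸ (Commute.one_right T).sub_right (hTp j)
  exact Commute.hatW_right (Commute.symP_right hTp hTq) _

theorem stmt5 {E : Type*} [NormedAddCommGroup E] [InnerProductSpace ℂ E] [CompleteSpace E]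
    (N : ℕ) (hN : 1 < N) (p q : Fin N → E →L[ℂ] E)
    (hidem : ∀ j, IsIdempotentElem (p j))
    (hsa : ∀ j, IsSelfAdjoint (p j))
    (hcomm : ∀ i j, Commute (p i) (p j))
    (hq : ∀ j, q j = 1 - p j)
    (f : ℕ → ℝ) (hf : ∀ k, 0 ≤ f k)
    (T : E →L[ℂ] E)
    (hT : ∀ i : Fin N, i ≠ ⟨0, Nat.lt_of_lt_of_le Nat.one_pos hN.le⟩ → i ≠ ⟨1, hN⟩ →
      Commute T (p i)) :
    T * hatW N (symP N p q) f - hatW N (symP N p q) f * T =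
      T * (p ⟨0, Nat.lt_of_lt_of_le Nat.one_pos hN.le⟩ * p ⟨1, hN⟩ *
            (hatW N (symP N p q) f - hatShiftW N (symP N p q) f 2) +
          (p ⟨0, Nat.lt_of_lt_of_le Nat.one_pos hN.le⟩ * q ⟨1, hN⟩ +
            q ⟨0, Nat.lt_of_lt_of_le Nat.one_pos hN.le⟩ * p ⟨1, hN⟩) *
            (hatW N (symP N p q) f - hatShiftW N (symP N p q) f 1)) -
        (p ⟨0, Nat.lt_of_lt_of_le Nat.one_pos hN.le⟩ * p ⟨1, hN⟩ *
            (hatW N (symP N p q) f - hatShiftW N (symP N p q) f 2) +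
          (p ⟨0, Nat.lt_of_lt_of_le Nat.one_pos hN.le⟩ * q ⟨1, hN⟩ +
            q ⟨0, Nat.lt_of_lt_of_le Nat.one_pos hN.le⟩ * p ⟨1, hN⟩) *
            (hatW N (symP N p q) f - hatShiftW N (symP N p q) f 1)) * T :=
  stmt5_general N hN p q hidem hcomm hq f T hT

end
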